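/- arXiv:0806.1946 — 3 statements merged into one kernel-verified Lean document; each statement's English description precedes it below -/
import Mathlib

section
/- Let ψ : ℝ^m → ℝ^m be a C^∞ map with ψ(0) = 0, and let L = Dψ_0 be its derivative at the origin. Then the map S : ℝ × ℝ^m → ℝ^m defined by S(t,x) = t⁻¹ • ψ(t • x) for t ≠ 0 and S(0,x) = L(x) is C^∞ on ℝ × ℝ^m. -/
/-!
By the fundamental theorem of calculus along the segment `[0, t • x]`, and since `ψ 0 = 0`,
`t⁻¹ • ψ (t • x) = ∫ s in 0..1, Dψ (s • t • x) x` for `t ≠ 0`; at `t = 0` the right-hand side is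
`Dψ 0 x`. So the deformation is a parametric integral over `[0, 1]` of a jointly smooth
integrand, and such integrals are smooth by repeated differentiation under the integral sign.
-/

open Function Set

universe u

section ParametricIntegral

-- `E` and `F` share a universe so that the induction can pass from `F` to `E →L[ℝ] F`.
variable {E F : Type u} [NormedAddCommGroup E] [NormedSpace ℝ E] [ProperSpace E]
  [NormedAddCommGroup F] [NormedSpace ℝ F]

theorem hasFDerivAt_intervalIntegral_of_contDiff {f : E → ℝ → F}
    (hf : ContDiff ℝ 1 (uncurry f)) (a b : ℝ) (x₀ : E) :
    HasFDerivAt (fun x => ∫ s in a..b, f x s)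
      (∫ s in a..b, (fderiv ℝ (uncurry f) (x₀, s)).comp (ContinuousLinearMap.inl ℝ E ℝ)) x₀ := by
  set f' : E → ℝ → E →L[ℝ] F := fun x s =>
    (fderiv ℝ (uncurry f) (x, s)).comp (ContinuousLinearMap.inl ℝ E ℝ)
  have hf' : Continuous (uncurry f') :=
    (hf.continuous_fderiv one_ne_zero).clm_comp continuous_const
  obtain ⟨C, hC⟩ : ∃ C, ∀ p ∈ Metric.closedBall x₀ 1 ×ˢ uIcc a b, ‖uncurry f' p‖ ≤ C :=
    ((isCompact_closedBall x₀ 1).prod isCompact_uIcc).exists_bound_of_continuousOn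
      hf'.continuousOn
  have hasFDerivAt_section (x : E) (s : ℝ) : HasFDerivAt (fun y => f y s) (f' x s) x :=
    ((hf.differentiable one_ne_zero) (x, s)).hasFDerivAt.comp (g := uncurry f) x
      (hasFDerivAt_prodMk_left (𝕜 := ℝ) x s)
  refine intervalIntegral.hasFDerivAt_integral_of_dominated_of_fderiv_le (F := f) (F' := f')
    (bound := fun _ => C) (Metric.ball_mem_nhds x₀ one_pos) ?_ ?_ ?_ ?_
    intervalIntegrable_const ?_
  · exact .of_forall fun x =>
      (hf.continuous.comp (Continuous.prodMk_right x)).aestronglyMeasurable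
  · exact (hf.continuous.comp (Continuous.prodMk_right x₀)).intervalIntegrable a b
  · exact (hf'.comp (Continuous.prodMk_right x₀)).aestronglyMeasurable
  · exact .of_forall fun s hs x hx =>
      hC (x, s) ⟨Metric.ball_subset_closedBall hx, uIoc_subset_uIcc hs⟩
  · exact .of_forall fun s _ x _ => hasFDerivAt_section x s

theorem contDiff_intervalIntegral_of_contDiff_uncurry {n : ℕ} {f : E → ℝ → F}
    (hf : ContDiff ℝ n (uncurry f)) (a b : ℝ) :
    ContDiff ℝ n fun x => ∫ s in a..b, f x s := by
  induction n generalizing F with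
  | zero =>
    rw [Nat.cast_zero, contDiff_zero] at hf ⊢
    exact intervalIntegral.continuous_parametric_intervalIntegral_of_continuous' hf a b
  | succ n ih =>
    have hderiv := hasFDerivAt_intervalIntegral_of_contDiff
      (hf.of_le (by exact_mod_cast Nat.le_add_left 1 n)) a b
    rw [Nat.cast_succ, contDiff_succ_iff_fderiv] at hf ⊢
    refine ⟨fun x => (hderiv x).differentiableAt, by simp, ?_⟩
    rw [funext fun x => (hderiv x).fderiv]
    exact ih (f := fun x s => (fderiv ℝ (uncurry f) (x, s)).comp (ContinuousLinearMap.inl ℝ E ℝ))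
      (hf.2.2.clm_comp contDiff_const)

end ParametricIntegral

section AlexanderTrick

variable {E F : Type*} [NormedAddCommGroup E] [NormedSpace ℝ E]
  [NormedAddCommGroup F] [NormedSpace ℝ F] [CompleteSpace F]

theorem map_eq_add_intervalIntegral_fderiv {f : E → F} (hf : ContDiff ℝ 1 f) (y : E) :
    f y = f 0 + ∫ s in (0 : ℝ)..1, fderiv ℝ f (s • y) y := by
  simpa using map_add_eq_sum_add_integral_iteratedFDeriv (n := 0) (x := 0) (y := y)
    fun t _ => hf.contDiffAt

theorem ite_inv_smul_map_smul_eq_intervalIntegral_fderiv {f : E → F} (hf : ContDiff ℝ 1 f)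
    (hf0 : f 0 = 0) (t : ℝ) (x : E) :
    (if t = 0 then fderiv ℝ f 0 x else t⁻¹ • f (t • x)) =
      ∫ s in (0 : ℝ)..1, fderiv ℝ f (s • t • x) x := by
  split_ifs with ht
  · simp [ht]
  · rw [map_eq_add_intervalIntegral_fderiv hf, hf0, zero_add, ← intervalIntegral.integral_smul]
    simp [smul_smul, ht]

end AlexanderTrick

/-- Smoothness of Alexander's trick: for a `C^∞` map `ψ` with `ψ 0 = 0`, the deformation
`S(t,x) = t⁻¹ • ψ (t • x)` for `t ≠ 0`, extended at `t = 0` by the linear part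
`Dψ₀` of `ψ`, is jointly `C^∞` on `ℝ × ℝ^m`. -/
theorem stmt2 (m : ℕ) (ψ : (Fin m → ℝ) → (Fin m → ℝ))
    (hψ : ContDiff ℝ (⊤ : ℕ∞) ψ) (hψ0 : ψ 0 = 0) :
    ContDiff ℝ (⊤ : ℕ∞) (fun p : ℝ × (Fin m → ℝ) =>
      if p.1 = 0 then fderiv ℝ ψ 0 p.2 else p.1⁻¹ • ψ (p.1 • p.2)) := by
  simp_rw [ite_inv_smul_map_smul_eq_intervalIntegral_fderiv (hψ.of_le (by simp)) hψ0]
  have hDψ : ContDiff ℝ (⊤ : ℕ∞) (fderiv ℝ ψ) := hψ.fderiv_right (by simp)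
  have hintegrand : ContDiff ℝ (⊤ : ℕ∞)
      (uncurry fun (p : ℝ × (Fin m → ℝ)) (s : ℝ) => fderiv ℝ ψ (s • p.1 • p.2) p.2) := by
    fun_prop
  exact contDiff_infty.2 fun n =>
    contDiff_intervalIntegral_of_contDiff_uncurry (contDiff_infty.1 hintegrand n) 0 1
end

section
/- Let k be a positive integer and let h : ℝ^m → ℝ be continuous and satisfy h(t•x) = t^k · h(x) for all t > 0 and x ∈ ℝ^m. Let ψ : ℝ^m → ℝ^m satisfy ψ(0) = 0, let ψ be differentiable at 0, and assume h ∘ ψ = h. Then h ∘ Dψ_0 = h, i.e. h((Dψ_0)(x)) = h(x) for every x ∈ ℝ^m. -/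
/-!
Dilating `ψ` by `ψ_s(x) = s • ψ(s⁻¹ • x)` does not change the invariance `h ∘ ψ = h`, because `h`
is homogeneous; as `s → ∞` the dilations converge pointwise to `Dψ₀`, so continuity of `h` passes
the invariance to the limit.
-/

open Filter Topology

theorem HasFDerivAt.tendsto_smul_comp_inv_smul_atTop
    {E F : Type*} [NormedAddCommGroup E] [NormedSpace ℝ E] [NormedAddCommGroup F] [NormedSpace ℝ F]
    {ψ : E → F} {L : E →L[ℝ] F} (hψ : HasFDerivAt ψ L 0) (hψ0 : ψ 0 = 0) (x : E) :
    Tendsto (fun s : ℝ => s • ψ (s⁻¹ • x)) atTop (𝓝 (L x)) := by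
  simpa [hψ0] using hψ.lim x tendsto_norm_atTop_atTop

theorem apply_smul_comp_inv_smul_eq_of_comp_eq
    {E : Type*} [AddCommGroup E] [Module ℝ E] {k : ℕ} {h : E → ℝ}
    (hhom : ∀ t : ℝ, 0 < t → ∀ x : E, h (t • x) = t ^ k * h x)
    {ψ : E → E} (hψ : h ∘ ψ = h) {s : ℝ} (hs : 0 < s) (x : E) :
    h (s • ψ (s⁻¹ • x)) = h x := by
  calc h (s • ψ (s⁻¹ • x)) = s ^ k * h (ψ (s⁻¹ • x)) := hhom s hs _
    _ = s ^ k * (s⁻¹ ^ k * h x) := by rw [← Function.comp_apply (f := h), hψ, hhom _ (inv_pos.2 hs)]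
    _ = h x := by rw [← mul_assoc, ← mul_pow, mul_inv_cancel₀ hs.ne', one_pow, one_mul]

theorem stmt3_general (m : ℕ) (k : ℕ)
    (h : (Fin m → ℝ) → ℝ) (hcont : Continuous h)
    (hhom : ∀ t : ℝ, 0 < t → ∀ x : Fin m → ℝ, h (t • x) = t ^ k * h x)
    (ψ : (Fin m → ℝ) → (Fin m → ℝ)) (hψ0 : ψ 0 = 0)
    (hdiff : DifferentiableAt ℝ ψ 0) (hψ : h ∘ ψ = h) :
    ∀ x : Fin m → ℝ, h (fderiv ℝ ψ 0 x) = h x := by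
  intro x
  have hlim : Tendsto (fun s : ℝ => h (s • ψ (s⁻¹ • x))) atTop (𝓝 (h (fderiv ℝ ψ 0 x))) :=
    (hcont.tendsto _).comp (hdiff.hasFDerivAt.tendsto_smul_comp_inv_smul_atTop hψ0 x)
  have hconst : Tendsto (fun s : ℝ => h (s • ψ (s⁻¹ • x))) atTop (𝓝 (h x)) :=
    tendsto_const_nhds.congr' <| (eventually_gt_atTop 0).mono fun s hs =>
      (apply_smul_comp_inv_smul_eq_of_comp_eq hhom hψ hs x).symm
  exact tendsto_nhds_unique hlim hconst

/-- If `h` is continuous and positively homogeneous of degree `k`, and `ψ` fixes `0`,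
is differentiable at `0` and preserves `h`, then the linear part `Dψ₀` of `ψ`
also preserves `h`. -/
theorem stmt3 (m : ℕ) (k : ℕ) (hk : 0 < k)
    (h : (Fin m → ℝ) → ℝ) (hcont : Continuous h)
    (hhom : ∀ t : ℝ, 0 < t → ∀ x : Fin m → ℝ, h (t • x) = t ^ k * h x)
    (ψ : (Fin m → ℝ) → (Fin m → ℝ)) (hψ0 : ψ 0 = 0)
    (hdiff : DifferentiableAt ℝ ψ 0) (hψ : h ∘ ψ = h) :
    ∀ x : Fin m → ℝ, h (fderiv ℝ ψ 0 x) = h x :=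
  stmt3_general m k h hcont hhom ψ hψ0 hdiff hψ
end

section
/- Fix k ∈ ℤ and define S : ℝ⁴ → ℝ⁴ in coordinates (x₁, x₂, ξ₁, ξ₂) by S(x₁,x₂,ξ₁,ξ₂) = (x₁', x₂, ξ₁', ξ₂ + k q₁), where x₁' = x₁cos(k x₂) − ξ₁ sin(k x₂), ξ₁' = x₁ sin(k x₂) + ξ₁ cos(k x₂) (i.e. x₁' + iξ₁' = e^{i k x₂}(x₁ + iξ₁)) and q₁ = (x₁² + ξ₁²)/2. Then: (i) S is a bijection of ℝ⁴; (ii) S is differentiable and its derivative preserves the standard symplectic form ω at every point, where ω(u,v) = u_{ξ₁} v_{x₁} − u_{x₁} v_{ξ₁} + u_{ξ₂} v_{x₂} − u_{x₂} v_{ξ₂}; (iii) q₁ ∘ S = q₁, so (q₁, ξ₂) ∘ S = (q₁, ξ₂ + k q₁). -/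
/-!
`S` rotates the `(x₁, ξ₁)`-plane by the angle `k x₂` and shifts `ξ₂` by `k q₁`. Rotations
preserve `q₁`, so the map with `-k` undoes it. In `ω(DS u, DS v)` the terms coming from the
`x₂`-dependence of the angle cancel against those coming from the shift `k dq₁`, leaving `ω(u, v)`.
-/

open Real

noncomputable section

def oscillator (p : ℝ × ℝ × ℝ × ℝ) : ℝ := (p.1 ^ 2 + p.2.2.1 ^ 2) / 2

def twist (k : ℝ) (p : ℝ × ℝ × ℝ × ℝ) : ℝ × ℝ × ℝ × ℝ :=
  (p.1 * cos (k * p.2.1) - p.2.2.1 * sin (k * p.2.1), p.2.1,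
   p.1 * sin (k * p.2.1) + p.2.2.1 * cos (k * p.2.1), p.2.2.2 + k * oscillator p)

def symplecticForm (u v : ℝ × ℝ × ℝ × ℝ) : ℝ :=
  u.2.2.1 * v.1 - u.1 * v.2.2.1 + u.2.2.2 * v.2.1 - u.2.1 * v.2.2.2

def twistDeriv (k : ℝ) (p : ℝ × ℝ × ℝ × ℝ) : (ℝ × ℝ × ℝ × ℝ) →L[ℝ] ℝ × ℝ × ℝ × ℝ :=
  LinearMap.toContinuousLinearMap
    { toFun := fun w =>
        (w.1 * cos (k * p.2.1) - w.2.2.1 * sin (k * p.2.1) - k * w.2.1 * (twist k p).2.2.1, w.2.1,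
         w.1 * sin (k * p.2.1) + w.2.2.1 * cos (k * p.2.1) + k * w.2.1 * (twist k p).1,
         w.2.2.2 + k * (p.1 * w.1 + p.2.2.1 * w.2.2.1))
      map_add' := fun u v => by ext <;> simp only [Prod.fst_add, Prod.snd_add] <;> ring
      map_smul' := fun c u => by
        ext <;> simp only [Prod.smul_fst, Prod.smul_snd, smul_eq_mul, RingHom.id_apply] <;> ring }

end

theorem twist_neg_twist (k : ℝ) (p : ℝ × ℝ × ℝ × ℝ) : twist (-k) (twist k p) = p := by
  have h := sin_sq_add_cos_sq (k * p.2.1)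
  simp only [twist, oscillator, neg_mul, cos_neg, sin_neg]
  ext <;> dsimp only
  · linear_combination p.1 * h
  · linear_combination p.2.2.1 * h
  · linear_combination (-k / 2 * (p.1 ^ 2 + p.2.2.1 ^ 2)) * h

theorem bijective_twist (k : ℝ) : Function.Bijective (twist k) :=
  Function.bijective_iff_has_inverse.2
    ⟨twist (-k), twist_neg_twist k, fun p => by simpa using twist_neg_twist (-k) p⟩

theorem oscillator_twist (k : ℝ) (p : ℝ × ℝ × ℝ × ℝ) : oscillator (twist k p) = oscillator p := by
  simp only [twist, oscillator]
  linear_combination (p.1 ^ 2 + p.2.2.1 ^ 2) / 2 * sin_sq_add_cos_sq (k * p.2.1)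

theorem hasFDerivAt_twist (k : ℝ) (p : ℝ × ℝ × ℝ × ℝ) :
    HasFDerivAt (twist k) (twistDeriv k p) p := by
  have hx₁ := hasFDerivAt_fst (𝕜 := ℝ) (p := p)
  have hx₂ξ := hasFDerivAt_snd (𝕜 := ℝ) (p := p)
  have hx₂ := (hasFDerivAt_fst (𝕜 := ℝ)).comp p hx₂ξ
  have hξ := (hasFDerivAt_snd (𝕜 := ℝ)).comp p hx₂ξ
  have hξ₁ := (hasFDerivAt_fst (𝕜 := ℝ)).comp p hξ
  have hξ₂ := (hasFDerivAt_snd (𝕜 := ℝ)).comp p hξ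
  have hθ := hx₂.const_mul k
  have h := (((hx₁.mul hθ.cos).sub (hξ₁.mul hθ.sin)).prodMk (hx₂.prodMk
    (((hx₁.mul hθ.sin).add (hξ₁.mul hθ.cos)).prodMk
      (hξ₂.add (((hx₁.pow 2).add (hξ₁.pow 2)).const_mul (k / 2))))))
  refine (h.congr_fderiv ?_).congr_of_eventuallyEq (.of_forall fun q => ?_)
  · refine ContinuousLinearMap.ext fun w => ?_
    simp only [Function.comp_apply, Nat.add_one_sub_one, pow_one, nsmul_eq_mul, Nat.cast_ofNat,
      smul_add, ContinuousLinearMap.prod_apply, sub_apply, add_apply,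
      smul_apply,
      ContinuousLinearMap.comp_apply, ContinuousLinearMap.coe_snd', ContinuousLinearMap.coe_fst',
      smul_eq_mul, neg_mul, mul_neg, twistDeriv, twist, LinearMap.coe_toContinuousLinearMap',
      LinearMap.coe_mk, AddHom.coe_mk, Prod.mk.injEq, add_right_inj, true_and]
    refine ⟨by ring, by ring, by ring⟩
  · simp only [twist, oscillator, Function.comp_apply, Pi.sub_apply, Pi.mul_apply, Pi.add_apply,
      Prod.mk.injEq, add_right_inj, true_and]
    ring

theorem symplecticForm_twistDeriv (k : ℝ) (p u v : ℝ × ℝ × ℝ × ℝ) :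
    symplecticForm (twistDeriv k p u) (twistDeriv k p v) = symplecticForm u v := by
  simp only [symplecticForm, twistDeriv, twist, LinearMap.coe_toContinuousLinearMap',
    LinearMap.coe_mk, AddHom.coe_mk]
  linear_combination (u.2.2.1 * v.1 - u.1 * v.2.2.1 +
      k * (u.2.1 * (p.1 * v.1 + p.2.2.1 * v.2.2.1) - v.2.1 * (p.1 * u.1 + p.2.2.1 * u.2.2.1))) *
    sin_sq_add_cos_sq (k * p.2.1)

/-- The map `S(x₁,x₂,ξ₁,ξ₂) = (x₁', x₂, ξ₁', ξ₂ + k q₁)` with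
`x₁' + iξ₁' = e^{ikx₂}(x₁ + iξ₁)` and `q₁ = (x₁² + ξ₁²)/2` is a bijective, differentiable
map of `ℝ⁴` whose derivative preserves the standard symplectic form at every point, and
which intertwines the momentum map `(q₁, ξ₂)` with `(q₁, ξ₂ + k q₁)`.
Here a point of `ℝ⁴` is written `p = (x₁, x₂, ξ₁, ξ₂)` as a nested product, and
`ω u v = u_{ξ₁} v_{x₁} − u_{x₁} v_{ξ₁} + u_{ξ₂} v_{x₂} − u_{x₂} v_{ξ₂}`. -/
theorem stmt5 (k : ℤ)
    (S : ℝ × ℝ × ℝ × ℝ → ℝ × ℝ × ℝ × ℝ)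
    (hS : ∀ p : ℝ × ℝ × ℝ × ℝ,
      S p = (p.1 * Real.cos ((k : ℝ) * p.2.1) - p.2.2.1 * Real.sin ((k : ℝ) * p.2.1),
             p.2.1,
             p.1 * Real.sin ((k : ℝ) * p.2.1) + p.2.2.1 * Real.cos ((k : ℝ) * p.2.1),
             p.2.2.2 + (k : ℝ) * ((p.1 ^ 2 + p.2.2.1 ^ 2) / 2)))
    (ω : ℝ × ℝ × ℝ × ℝ → ℝ × ℝ × ℝ × ℝ → ℝ)
    (hω : ∀ u v : ℝ × ℝ × ℝ × ℝ,
      ω u v = u.2.2.1 * v.1 - u.1 * v.2.2.1 + u.2.2.2 * v.2.1 - u.2.1 * v.2.2.2)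
    (q₁ : ℝ × ℝ × ℝ × ℝ → ℝ) (hq₁ : ∀ p, q₁ p = (p.1 ^ 2 + p.2.2.1 ^ 2) / 2) :
    Function.Bijective S ∧
    Differentiable ℝ S ∧
    (∀ p u v, ω (fderiv ℝ S p u) (fderiv ℝ S p v) = ω u v) ∧
    (∀ p, q₁ (S p) = q₁ p) ∧
    (∀ p, (S p).2.2.2 = p.2.2.2 + (k : ℝ) * q₁ p) := by
  obtain rfl : S = twist k := funext hS
  obtain rfl : ω = symplecticForm := funext₂ hω
  obtain rfl : q₁ = oscillator := funext hq₁
  refine ⟨bijective_twist k, fun p => (hasFDerivAt_twist k p).differentiableAt,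
    fun p u v => ?_, oscillator_twist k, fun p => rfl⟩
  rw [(hasFDerivAt_twist k p).fderiv]
  exact symplecticForm_twistDeriv k p u v
end
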